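/- Suppose the covering number of a function class F (with respect to the empirical L² norm on an n-point sample, functions taking values in [−V, V]) satisfies log N(ε, F, ‖·‖) ≤ 50 V⁶ ε⁻⁴ log(2n+2) for all 0 < ε ≤ V, where V ≥ 1. Then there is a universal constant C₁ ≥ 0 such that the empirical Rademacher complexity satisfies 𝓡ₙ(F) ≤ C₁ V³ √(log(2n+2)) / n^{1/4} · (appropriately, via the Dudley entropy integral bound 𝓡ₙ(F) ≤ inf_{0≤δ≤1/2} [4δ + (12/√n) ∫_δ^{V} √(log N(ε,F,‖·‖)) dε]). -/

import Mathlib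

/-!
Dudley's bound at the single scale `δ = 1 / (2 n^(1/4))` suffices. The covering estimate gives
`√(log N(ε)) ≤ √K / ε²` with `K = 50 V⁶ log(2n+2)`, so the entropy integral from `δ` to `V` is at
most `√K / δ`. Since `√n = (n^(1/4))²`, both `4δ` and `(12/√n) · √K / δ` are then of order
`V³ √(log(2n+2)) / n^(1/4)`, using `V³ √(log(2n+2)) ≥ 1` to absorb the first term.
-/
open Real Set MeasureTheory intervalIntegral
open scoped Interval

theorem integral_inv_sq {a b : ℝ} (h : (0 : ℝ) ∉ [[a, b]]) :
    ∫ x in a..b, (x ^ 2)⁻¹ = a⁻¹ - b⁻¹ := by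
  have := integral_zpow (a := a) (b := b) (n := -2) (Or.inr ⟨by norm_num, h⟩)
  simp only [zpow_neg, zpow_ofNat] at this
  rw [this]; norm_num; ring

theorem integral_le_integral_of_nonneg_of_le_on {f g : ℝ → ℝ} {a b : ℝ} (hab : a ≤ b)
    (hf : ∀ x ∈ Icc a b, 0 ≤ f x) (hfg : ∀ x ∈ Icc a b, f x ≤ g x)
    (hg : IntervalIntegrable g volume a b) : ∫ x in a..b, f x ≤ ∫ x in a..b, g x := by
  by_cases hfi : IntervalIntegrable f volume a b
  · exact integral_mono_on hab hfi hg hfg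
  · rw [integral_undef hfi]
    exact integral_nonneg hab fun x hx => (hf x hx).trans (hfg x hx)

theorem sqrt_le_sqrt_div_sq {x K ε : ℝ} (hε : 0 < ε) (hx : x ≤ K / ε ^ 4) :
    √x ≤ √K / ε ^ 2 := by
  calc √x ≤ √(K / (ε ^ 2) ^ 2) := sqrt_le_sqrt (by rwa [← pow_mul])
    _ = √K / ε ^ 2 := by rw [sqrt_div' _ (by positivity), sqrt_sq (by positivity)]

theorem integral_sqrt_le_of_le_div_pow_four {h : ℝ → ℝ} {K δ V : ℝ} (hδ : 0 < δ) (hδV : δ ≤ V)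
    (hh : ∀ ε, 0 < ε → ε ≤ V → h ε ≤ K / ε ^ 4) :
    ∫ ε in δ..V, √(h ε) ≤ √K / δ := by
  have h0 : (0 : ℝ) ∉ [[δ, V]] := by rw [uIcc_of_le hδV]; exact fun hx => hδ.not_ge hx.1
  have hint : IntervalIntegrable (fun ε : ℝ => √K * (ε ^ 2)⁻¹) volume δ V :=
    (continuousOn_const.mul ((continuousOn_pow 2).inv₀
      fun ε hε => pow_ne_zero 2 (ne_of_mem_of_not_mem hε h0))).intervalIntegrable
  calc ∫ ε in δ..V, √(h ε) ≤ ∫ ε in δ..V, √K * (ε ^ 2)⁻¹ :=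
        integral_le_integral_of_nonneg_of_le_on hδV (fun _ _ => sqrt_nonneg _) (fun ε hε =>
          (sqrt_le_sqrt_div_sq (hδ.trans_le hε.1) (hh ε (hδ.trans_le hε.1) hε.2)).trans_eq
            (div_eq_mul_inv _ _)) hint
    _ = √K * (δ⁻¹ - V⁻¹) := by rw [intervalIntegral.integral_const_mul, integral_inv_sq h0]
    _ ≤ √K / δ := by
        rw [div_eq_mul_inv]
        gcongr
        linarith [inv_nonneg.2 (hδ.le.trans hδV)]

theorem one_le_log_two_mul_add_two {n : ℕ} (hn : 1 ≤ n) : 1 ≤ log (2 * n + 2) := by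
  have : (4 : ℝ) ≤ 2 * n + 2 := by
    have : (1 : ℝ) ≤ n := by exact_mod_cast hn
    linarith
  rw [le_log_iff_exp_le (by positivity)]
  linarith [exp_one_lt_d9]

theorem le_of_le_iInf_of_nonneg {ι : Sort*} {f : ι → ℝ} {R : ℝ} (hf : ∀ i, 0 ≤ f i)
    (hR : R ≤ ⨅ i, f i) (i : ι) : R ≤ f i :=
  hR.trans (ciInf_le ⟨0, by rintro _ ⟨j, rfl⟩; exact hf j⟩ i)

theorem sqrt_eq_rpow_one_div_four_sq (x : ℝ) (hx : 0 ≤ x) : √x = (x ^ ((1 : ℝ) / 4)) ^ 2 := by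
  rw [sqrt_eq_rpow, ← rpow_natCast, ← rpow_mul hx]; norm_num

/-- Dudley entropy-integral bound combined with the Anthony–Bartlett covering number
estimate for two-layer networks with 1-Lipschitz activation and weight bound `V`:
if `log N(ε) ≤ 50 V⁶ ε⁻⁴ log(2n+2)` for `0 < ε ≤ V` and the empirical Rademacher
complexity `R` satisfies the Dudley bound `R ≤ inf_{0≤δ≤1/2}[4δ + (12/√n)∫_δ^V √(log N)]`,
then `R ≤ C₁ V³ √(log(2n+2)) / n^(1/4)` for a universal constant `C₁ ≥ 0`. -/
theorem dudley_rademacher_bound :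
    ∃ C₁ : ℝ, 0 ≤ C₁ ∧ ∀ (n : ℕ) (V : ℝ) (N : ℝ → ℝ) (R : ℝ),
      1 ≤ n → 1 ≤ V →
      (∀ ε : ℝ, 0 < ε → ε ≤ V →
        Real.log (N ε) ≤ 50 * V ^ 6 / ε ^ 4 * Real.log (2 * n + 2)) →
      R ≤ ⨅ δ : Set.Icc (0:ℝ) (1/2),
          4 * (δ : ℝ) + 12 / Real.sqrt n *
            ∫ ε in (δ : ℝ)..V, Real.sqrt (Real.log (N ε)) →
      R ≤ C₁ * V ^ 3 * Real.sqrt (Real.log (2 * n + 2)) / (n : ℝ) ^ ((1:ℝ)/4) := by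
  refine ⟨2 + 24 * √50, by positivity, fun n V N R hn hV hN hR => ?_⟩
  set L := log (2 * n + 2)
  set t := (n : ℝ) ^ ((1 : ℝ) / 4)
  have ht : 1 ≤ t := one_le_rpow (by exact_mod_cast hn) (by norm_num)
  have hL : 1 ≤ L := one_le_log_two_mul_add_two hn
  have hA : 1 ≤ V ^ 3 * √L := one_le_mul_of_one_le_of_one_le (one_le_pow₀ hV) (one_le_sqrt.2 hL)
  have hδ : (2 * t)⁻¹ ∈ Icc (0 : ℝ) (1 / 2) :=
    ⟨by positivity, by rw [one_div]; exact inv_anti₀ two_pos (by linarith)⟩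
  have hδV : (2 * t)⁻¹ ≤ V := hδ.2.trans (by linarith)
  have hentropy := integral_sqrt_le_of_le_div_pow_four (h := fun ε => log (N ε))
    (K := 50 * V ^ 6 * L) (by positivity) hδV fun ε hε hεV => (hN ε hε hεV).trans_eq (by ring)
  have hK : √(50 * V ^ 6 * L) = √50 * (V ^ 3 * √L) := by
    rw [sqrt_mul' _ (zero_le_one.trans hL), sqrt_mul' _ (by positivity),
      show V ^ 6 = (V ^ 3) ^ 2 by ring, sqrt_sq (by positivity)]
    ring
  have hdudley_nonneg (δ : Icc (0 : ℝ) (1 / 2)) :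
      0 ≤ 4 * (δ : ℝ) + 12 / √n * ∫ ε in (δ : ℝ)..V, √(log (N ε)) :=
    add_nonneg (by linarith [δ.2.1]) (mul_nonneg (by positivity)
      (integral_nonneg (δ.2.2.trans (by linarith)) fun _ _ => sqrt_nonneg _))
  calc R ≤ 4 * (2 * t)⁻¹ + 12 / √n * ∫ ε in (2 * t)⁻¹..V, √(log (N ε)) :=
        le_of_le_iInf_of_nonneg hdudley_nonneg hR ⟨_, hδ⟩
    _ ≤ 4 * (2 * t)⁻¹ + 12 / t ^ 2 * (√50 * (V ^ 3 * √L) / (2 * t)⁻¹) := by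
        rw [sqrt_eq_rpow_one_div_four_sq _ n.cast_nonneg, ← hK]; gcongr
    _ = (2 + 24 * √50 * (V ^ 3 * √L)) / t := by field_simp; ring
    _ ≤ (2 + 24 * √50) * V ^ 3 * √L / t := by gcongr; nlinarith [sqrt_nonneg 50]
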